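/- arXiv:1409.5565 — 2 statements merged into one kernel-verified Lean document; each statement's English description precedes it below -/
import Mathlib

section
/- Let e ∈ S be an idempotent and let λ ∈ J_e^* be regular in J_e^*. Then for every group homomorphism θ : H_{e'} → ℂ^×, the induced character χ_{θ,λ} is constant on superclasses: for all g ∈ G, t ∈ H and a, b ∈ N one has χ_{θ,λ}(1 + t·a·(g − 1)·b·t⁻¹) = χ_{θ,λ}(g). -/
/-- `h ∈ H = S^×`: `h` lies in `S` and is invertible with inverse in `S`. -/
def MemH {F A : Type*} [Field F] [Ring A] [Algebra F A]
    (S : Subalgebra F A) (h : A) : Prop :=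
  h ∈ S ∧ ∃ h' ∈ S, h * h' = 1 ∧ h' * h = 1

/-- `h ∈ H_{e'} = {h ∈ H : h * e = e * h = e}`. -/
def MemHePrime {F A : Type*} [Field F] [Ring A] [Algebra F A]
    (S : Subalgebra F A) (e h : A) : Prop :=
  MemH S h ∧ h * e = e ∧ e * h = e

/-- The set `G_λ = {h + x : h ∈ H_{e'}, x ∈ J, λ(xu) = 0 for all u ∈ J}`. -/
def GlamSet {F A : Type*} [Field F] [Ring A] [Algebra F A]
    (J : Ideal A) (hJr : ∀ x ∈ J, ∀ a : A, x * a ∈ J) (S : Subalgebra F A) (e : A)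
    (lam : (Submodule.restrictScalars F J) →ₗ[F] F) : Set A :=
  {g | ∃ h x : A, MemHePrime S e h ∧
    (∃ hx : x ∈ J, ∀ u (_ : u ∈ J), lam ⟨x * u, hJr x hx u⟩ = 0) ∧ g = h + x}

/-- The linear character `ξ_{θ,λ}(h + x) = θ(h) · ε(λ(x))`, written using the projections
onto `S` and `J` coming from the decomposition `A = S ⊕ J`. -/
noncomputable def xiFun {F A : Type*} [Field F] [Ring A] [Algebra F A]
    (J : Ideal A) (S : Subalgebra F A)
    (hS : IsCompl (Subalgebra.toSubmodule S) (Submodule.restrictScalars F J))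
    (θ : A → ℂ) (ε : F → ℂ)
    (lam : (Submodule.restrictScalars F J) →ₗ[F] F) (g : A) : ℂ :=
  θ ((Submodule.linearProjOfIsCompl _ _ hS g : A)) *
    ε (lam (Submodule.linearProjOfIsCompl _ _ hS.symm g))

/-- The induced (super)character `χ_{θ,λ}(g) = |G_λ|⁻¹ · Σ_{s ∈ G, s⁻¹gs ∈ G_λ} ξ(s⁻¹gs)`,
where `G = Aˣ`. -/
noncomputable def chiFun {F A : Type*} [Field F] [Ring A] [Algebra F A]
    (J : Ideal A) (hJr : ∀ x ∈ J, ∀ a : A, x * a ∈ J) (S : Subalgebra F A)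
    (hS : IsCompl (Subalgebra.toSubmodule S) (Submodule.restrictScalars F J))
    (e : A) (θ : A → ℂ) (ε : F → ℂ)
    (lam : (Submodule.restrictScalars F J) →ₗ[F] F) (g : A) : ℂ :=
  (Nat.card (GlamSet J hJr S e lam) : ℂ)⁻¹ *
    ∑ᶠ s ∈ {s : Aˣ | ((s⁻¹ : Aˣ) : A) * g * (s : A) ∈ GlamSet J hJr S e lam},
      xiFun J S hS θ ε lam (((s⁻¹ : Aˣ) : A) * g * (s : A))

/-! By orthogonality of the additive character `ε`, the function `1_{G_λ} · ξ` times `|J|` equals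
`m ↦ Σ_{n ∈ N} [π_S m ∈ H_{e'}] θ(π_S m) ε(λ(π_J(m) n))`, where `π_S`, `π_J` are the projections
of `A = S ⊕ J`. In this form, replacing `1 + c (y - 1)` by `c y c⁻¹` for `c ∈ N` keeps `π_S` and
changes `π_J(m) n` into `π_J(m) c n` up to a term `(1 - π_S m) j` that `λ = λ(e · e)` kills, as
`e π_S(m) = e`; since `n ↦ c n` permutes `N`, this gives `χ(1 + d (g - 1)) = χ(d g d⁻¹) = χ(g)`
for `d ∈ N`. Finally `1 + t a (g - 1) b t⁻¹` is conjugate to `1 + b a (g - 1)`. -/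

open Submodule

theorem AddChar.sum_apply_linearMap_eq_zero {F V R : Type*} [Field F] [AddCommGroup V]
    [Module F V] [Fintype V] [CommRing R] [IsDomain R] {ψ : AddChar F R} (hψ : ψ ≠ 1)
    {f : V →ₗ[F] F} (hf : f ≠ 0) : ∑ v, ψ (f v) = 0 := by
  obtain ⟨v, hv⟩ : ∃ v, f v ≠ 0 := by
    by_contra! h
    exact hf (LinearMap.ext h)
  obtain ⟨a, ha⟩ := AddChar.ne_one_iff.1 hψ
  refine sum_eq_zero_of_ne_one (ψ := ψ.compAddMonoidHom f.toAddMonoidHom)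
    (ne_one_iff.2 ⟨(a / f v) • v, ?_⟩)
  simpa [div_mul_cancel₀ _ hv] using ha

theorem Submodule.projectionOnto_eq_of_sub_mem {R E : Type*} [Ring R] [AddCommGroup E]
    [Module R E] {p q : Submodule R E} (h : IsCompl p q) {x y : E} (hxy : x - y ∈ q) :
    p.projectionOnto q h x = p.projectionOnto q h y := by
  rwa [← sub_eq_zero, ← map_sub, projectionOnto_apply_eq_zero_iff]

theorem Submodule.coe_projectionOnto_symm_apply {R E : Type*} [Ring R] [AddCommGroup E]
    [Module R E] {p q : Submodule R E} (h : IsCompl p q) (x : E) :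
    (q.projectionOnto p h.symm x : E) = x - p.projectionOnto q h x := by
  rw [eq_sub_iff_add_eq', coe_projectionOnto_apply, coe_projectionOnto_apply,
    projection_add_projection_eq_self]

theorem isUnit_of_sub_one_mem_jacobson_bot_of_finite {A : Type*} [Ring A] [Finite A] {a : A}
    (h : a - 1 ∈ (⊥ : Ideal A).jacobson) : IsUnit a := by
  obtain ⟨s, hs⟩ := Ideal.exists_mul_sub_mem_of_sub_one_mem_jacobson a h
  rw [Ideal.mem_bot, sub_eq_zero] at hs
  exact .of_mul_eq_one_right s hs

theorem Units.sum_conj_conj {M β : Type*} [Monoid M] [Fintype Mˣ] [AddCommMonoid β]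
    (f : M → β) (u : Mˣ) (x : M) :
    ∑ s : Mˣ, f (↑s⁻¹ * (u * x * ↑u⁻¹) * s) = ∑ s : Mˣ, f (↑s⁻¹ * x * s) :=
  Fintype.sum_equiv (Equiv.mulLeft u⁻¹) _ _ fun s => by simp [mul_assoc]

theorem sum_mul_one_add_of_sub_one_mem {F A M : Type*} [Field F] [Ring A] [Algebra F A]
    [AddCommMonoid M] {J : Ideal A} (hJr : ∀ x ∈ J, ∀ a : A, x * a ∈ J)
    [Fintype (restrictScalars F J)] (c : Aˣ) (hc : (c : A) - 1 ∈ J) (f : A → M) :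
    ∑ v : restrictScalars F J, f (c * (1 + v)) = ∑ v : restrictScalars F J, f (1 + v) := by
  have hmem (v : restrictScalars F J) : (c : A) * (1 + v) - 1 ∈ J := by
    rw [show (c : A) * (1 + v) - 1 = (c - 1) * (1 + v) + v by noncomm_ring]
    exact J.add_mem (hJr _ hc _) v.2
  let shift (v : restrictScalars F J) : restrictScalars F J := ⟨c * (1 + v) - 1, hmem v⟩
  have hshift : Function.Injective shift := fun v w hvw => by
    simpa [shift] using congrArg Subtype.val hvw
  exact Fintype.sum_bijective shift (Finite.injective_iff_bijective.1 hshift) _ _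
    fun v => by simp [shift]

section Superclass

variable {F A : Type*} [Field F] [Ring A] [Algebra F A] {J : Ideal A} {S : Subalgebra F A}
  (hJr : ∀ x ∈ J, ∀ a : A, x * a ∈ J)
  (hS : IsCompl (Subalgebra.toSubmodule S) (restrictScalars F J))
  (e : A) (θ : A → ℂ) (ψ : AddChar F ℂ) (lam : restrictScalars F J →ₗ[F] F)

local notation "J_F" => restrictScalars F J

def functionalMulLeft (x : J_F) : A →ₗ[F] F where
  toFun a := lam ⟨x * a, hJr x x.2 a⟩
  map_add' a b := by
    rw [← map_add]
    exact congrArg lam (Subtype.ext (mul_add _ _ _))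
  map_smul' c a := by
    rw [← map_smul]
    exact congrArg lam (Subtype.ext (mul_smul_comm _ _ _))

theorem functionalMulLeft_apply_eq_add {x y : J_F} {a b z : A} (hz : z ∈ J)
    (hxy : (x : A) * a = y * b + z) :
    functionalMulLeft hJr lam x a = functionalMulLeft hJr lam y b + lam ⟨z, hz⟩ :=
  (congrArg lam (Subtype.ext hxy)).trans (map_add lam _ _)

theorem lam_eq_zero_of_mul_eq_zero
    (hlam : ∀ x (hx : x ∈ J), lam ⟨x, hx⟩ = lam ⟨e * x * e, hJr _ (J.mul_mem_left e hx) e⟩)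
    {x : A} (hx : x ∈ J) (hex : e * x = 0) : lam ⟨x, hx⟩ = 0 := by
  rw [hlam x hx, ← map_zero lam]
  exact congrArg lam (Subtype.ext (by simp [hex]))

open scoped Classical in
noncomputable def xiFourierTerm (m n : A) : ℂ :=
  if MemHePrime S e (projectionOnto _ _ hS m : A) then
    θ (projectionOnto _ _ hS m) * ψ (functionalMulLeft hJr lam (projectionOnto _ _ hS.symm m) n)
  else 0

noncomputable def xiFourierSum [Fintype J_F] (m : A) : ℂ :=
  ∑ v : J_F, xiFourierTerm hJr hS e θ ψ lam m (1 + v)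

theorem mem_glamSet_iff (m : A) :
    m ∈ GlamSet J hJr S e lam ↔ MemHePrime S e (projectionOnto _ _ hS m : A) ∧
      (functionalMulLeft hJr lam (projectionOnto _ _ hS.symm m)).comp (Submodule.subtype J_F) =
        0 := by
  constructor
  · rintro ⟨h, x, hh, ⟨hx, hlx⟩, rfl⟩
    have hSpart : projectionOnto _ _ hS (h + x) = ⟨h, hh.1.1⟩ := by
      rw [map_add, projectionOnto_apply_of_mem_left hS hh.1.1,
        projectionOnto_apply_of_mem_right hS hx, add_zero]
    have hJpart : projectionOnto _ _ hS.symm (h + x) = ⟨x, hx⟩ := by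
      rw [map_add, projectionOnto_apply_of_mem_right hS.symm hh.1.1,
        projectionOnto_apply_of_mem_left hS.symm hx, zero_add]
    rw [hSpart, hJpart]
    exact ⟨hh, LinearMap.ext fun u => hlx u u.2⟩
  · rintro ⟨hp, hl⟩
    refine ⟨_, _, hp, ⟨(projectionOnto _ _ hS.symm m).2,
      fun u hu => LinearMap.congr_fun hl ⟨u, hu⟩⟩, ?_⟩
    rw [coe_projectionOnto_symm_apply hS]
    abel

theorem xiFun_eq (m : A) :
    xiFun J S hS θ ψ lam m =
      θ (projectionOnto _ _ hS m) * ψ (lam (projectionOnto _ _ hS.symm m)) :=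
  rfl

theorem xiFourierSum_eq_indicator [Fintype J_F] (hψ : ψ ≠ 1) (m : A) :
    xiFourierSum hJr hS e θ ψ lam m =
      Fintype.card J_F * (GlamSet J hJr S e lam).indicator (xiFun J S hS θ ψ lam) m := by
  unfold xiFourierSum xiFourierTerm
  by_cases hp : MemHePrime S e (projectionOnto _ _ hS m : A)
  · set L := functionalMulLeft hJr lam (projectionOnto _ _ hS.symm m)
    have hsum : ∑ v : J_F, ψ (L (1 + v)) =
        ψ (L 1) * ∑ v, ψ (L.comp (Submodule.subtype J_F) v) := by
      simp only [map_add, AddChar.map_add_eq_mul, Finset.mul_sum]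
      rfl
    have hL1 : L 1 = lam (projectionOnto _ _ hS.symm m) := congrArg lam (Subtype.ext (mul_one _))
    simp only [if_pos hp, ← Finset.mul_sum, hsum]
    by_cases hL : L.comp (Submodule.subtype J_F) = 0
    · rw [Set.indicator_of_mem ((mem_glamSet_iff hJr hS e lam m).2 ⟨hp, hL⟩), hL, xiFun_eq,
        ← hL1]
      simp only [LinearMap.zero_apply, AddChar.map_zero_eq_one, Finset.sum_const,
        Finset.card_univ, nsmul_eq_mul, mul_one]
      ring
    · rw [Set.indicator_of_notMem fun hm => hL ((mem_glamSet_iff hJr hS e lam m).1 hm).2,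
        AddChar.sum_apply_linearMap_eq_zero hψ hL, mul_zero, mul_zero, mul_zero]
  · rw [Set.indicator_of_notMem fun hm => hp ((mem_glamSet_iff hJr hS e lam m).1 hm).1]
    simp only [if_neg hp, Finset.sum_const_zero, mul_zero]

theorem chiFun_eq_sum_xiFourierSum [Fintype Aˣ] [Fintype J_F] (hψ : ψ ≠ 1) (X : A) :
    chiFun J hJr S hS e θ ψ lam X = (Nat.card (GlamSet J hJr S e lam) : ℂ)⁻¹ *
      (Fintype.card J_F : ℂ)⁻¹ * ∑ s : Aˣ, xiFourierSum hJr hS e θ ψ lam (↑s⁻¹ * X * s) := by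
  have hcard : (Fintype.card J_F : ℂ) ≠ 0 := Nat.cast_ne_zero.2 Fintype.card_ne_zero
  rw [chiFun, finsum_mem_def, finsum_eq_sum_of_fintype]
  simp only [xiFourierSum_eq_indicator hJr hS e θ ψ lam hψ, ← Finset.mul_sum, mul_assoc,
    inv_mul_cancel_left₀ hcard]
  rfl

theorem xiFourierTerm_one_add_mul_sub_one
    (hlam : ∀ x (hx : x ∈ J), lam ⟨x, hx⟩ = lam ⟨e * x * e, hJr _ (J.mul_mem_left e hx) e⟩)
    (c : Aˣ) (hc : (c : A) - 1 ∈ J) (y n : A) :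
    xiFourierTerm hJr hS e θ ψ lam (1 + c * (y - 1)) n =
      xiFourierTerm hJr hS e θ ψ lam (c * y * ↑c⁻¹) (c * n) := by
  have hcc : (c : A) * y * ↑c⁻¹ * c = c * y := by rw [mul_assoc _ _ (c : A), Units.inv_mul, mul_one]
  have hproj : projectionOnto _ _ hS (1 + c * (y - 1)) = projectionOnto _ _ hS (c * y * ↑c⁻¹) := by
    refine projectionOnto_eq_of_sub_mem hS ?_
    have : 1 + c * (y - 1) - c * y * ↑c⁻¹ = (c * y * ↑c⁻¹ - 1) * (c - 1) := by
      rw [sub_one_mul, mul_sub_one (↑c * y * ↑c⁻¹), hcc]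
      noncomm_ring
    rw [this]
    exact J.mul_mem_left _ hc
  unfold xiFourierTerm
  rw [hproj]
  split_ifs with hp
  · set p : A := (projectionOnto _ _ hS (c * y * ↑c⁻¹) : A)
    have hz : (1 - p) * ((c - 1) * n) ∈ J := J.mul_mem_left _ (hJr _ hc _)
    have hsplit : (projectionOnto _ _ hS.symm (c * y * ↑c⁻¹) : A) * (c * n) =
        projectionOnto _ _ hS.symm (1 + c * (y - 1)) * n + (1 - p) * ((c - 1) * n) := by
      rw [coe_projectionOnto_symm_apply hS, coe_projectionOnto_symm_apply hS, hproj,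
        ← mul_assoc, sub_mul, hcc]
      simp only [p]
      noncomm_ring
    have hvanish : lam ⟨(1 - p) * ((c - 1) * n), hz⟩ = 0 :=
      lam_eq_zero_of_mul_eq_zero hJr e lam hlam hz <| by
        rw [← mul_assoc, mul_sub, mul_one, hp.2.2, sub_self, zero_mul]
    rw [functionalMulLeft_apply_eq_add hJr lam hz hsplit, hvanish, add_zero]
  · rfl

theorem xiFourierSum_one_add_mul_sub_one [Fintype J_F]
    (hlam : ∀ x (hx : x ∈ J), lam ⟨x, hx⟩ = lam ⟨e * x * e, hJr _ (J.mul_mem_left e hx) e⟩)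
    (c : Aˣ) (hc : (c : A) - 1 ∈ J) (y : A) :
    xiFourierSum hJr hS e θ ψ lam (1 + c * (y - 1)) =
      xiFourierSum hJr hS e θ ψ lam (c * y * ↑c⁻¹) := by
  simp only [xiFourierSum, xiFourierTerm_one_add_mul_sub_one hJr hS e θ ψ lam hlam c hc]
  exact sum_mul_one_add_of_sub_one_mem hJr c hc _

theorem chiFun_conj [Fintype Aˣ] [Fintype J_F] (hψ : ψ ≠ 1) (u : Aˣ) (X : A) :
    chiFun J hJr S hS e θ ψ lam (u * X * ↑u⁻¹) = chiFun J hJr S hS e θ ψ lam X := by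
  simp only [chiFun_eq_sum_xiFourierSum hJr hS e θ ψ lam hψ, Units.sum_conj_conj]

theorem chiFun_one_add_mul_sub_one [Fintype Aˣ] [Fintype J_F] (hψ : ψ ≠ 1)
    (hlam : ∀ x (hx : x ∈ J), lam ⟨x, hx⟩ = lam ⟨e * x * e, hJr _ (J.mul_mem_left e hx) e⟩)
    (d : Aˣ) (hd : (d : A) - 1 ∈ J) (X : A) :
    chiFun J hJr S hS e θ ψ lam (1 + d * (X - 1)) = chiFun J hJr S hS e θ ψ lam (d * X * ↑d⁻¹) := by
  simp only [chiFun_eq_sum_xiFourierSum hJr hS e θ ψ lam hψ]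
  congr 1
  refine Finset.sum_congr rfl fun s _ => ?_
  have hc : ((s⁻¹ * d * s : Aˣ) : A) - 1 ∈ J := by
    have : ((s⁻¹ * d * s : Aˣ) : A) - 1 = ↑s⁻¹ * (d - 1) * s := by
      simp [mul_sub, sub_mul]
    rw [this]
    exact hJr _ (J.mul_mem_left _ hd) _
  convert xiFourierSum_one_add_mul_sub_one hJr hS e θ ψ lam hlam _ hc (↑s⁻¹ * X * s) using 2 <;>
    simp [mul_assoc, mul_add, mul_sub, add_mul, sub_mul]

end Superclass

theorem chi_constant_on_superclasses_general
    {F A : Type*} [Field F] [Fintype F] [Ring A] [Algebra F A] [FiniteDimensional F A]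
    (J : Ideal A) (hJ : J = (⊥ : Ideal A).jacobson)
    (hJr : ∀ x ∈ J, ∀ a : A, x * a ∈ J)
    (S : Subalgebra F A)
    (hS : IsCompl (Subalgebra.toSubmodule S) (Submodule.restrictScalars F J))
    (e : A)
    (lam : (Submodule.restrictScalars F J) →ₗ[F] F)
    (hlam : ∀ x (hx : x ∈ J), lam ⟨x, hx⟩ = lam ⟨e * x * e, hJr _ (J.mul_mem_left e hx) e⟩)
    (θ : A → ℂ)
    (ε : F → ℂ) (hεadd : ∀ a b : F, ε (a + b) = ε a * ε b) (hε0 : ε 0 = 1)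
    (hεnt : ∃ a : F, ε a ≠ 1) :
    ∀ g : Aˣ, ∀ t : Aˣ, (t : A) ∈ S → ((t⁻¹ : Aˣ) : A) ∈ S →
      ∀ a b : A, a - 1 ∈ J → b - 1 ∈ J →
        chiFun J hJr S hS e θ ε lam
            (1 + (t : A) * a * ((g : A) - 1) * b * ((t⁻¹ : Aˣ) : A)) =
          chiFun J hJr S hS e θ ε lam (g : A) := by
  intro g t _ _ a b ha hb
  have : Finite A := Module.finite_of_finite F
  let : Fintype Aˣ := Fintype.ofFinite _
  let : Fintype (restrictScalars F J) := Fintype.ofFinite _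
  let ψ : AddChar F ℂ := ⟨ε, hε0, hεadd⟩
  have hψ : ψ ≠ 1 := AddChar.ne_one_iff.2 hεnt
  obtain ⟨a, rfl⟩ := isUnit_of_sub_one_mem_jacobson_bot_of_finite (hJ ▸ ha)
  obtain ⟨b, rfl⟩ := isUnit_of_sub_one_mem_jacobson_bot_of_finite (hJ ▸ hb)
  have hd : ((b * a : Aˣ) : A) - 1 ∈ J := by
    rw [Units.val_mul, show (b : A) * a - 1 = b * (a - 1) + (b - 1) by noncomm_ring]
    exact J.add_mem (J.mul_mem_left _ ha) hb
  have hconj : 1 + (t : A) * a * (g - 1) * b * ↑t⁻¹ =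
      ↑(t * b⁻¹) * (1 + ↑(b * a) * (g - 1)) * ↑(t * b⁻¹)⁻¹ := by
    simp [mul_add, add_mul, mul_sub, sub_mul, mul_assoc]
  calc chiFun J hJr S hS e θ ε lam (1 + (t : A) * a * (g - 1) * b * ↑t⁻¹)
      = chiFun J hJr S hS e θ ε lam (1 + ↑(b * a) * (g - 1)) := by
        rw [hconj]
        exact chiFun_conj hJr hS e θ ψ lam hψ _ _
    _ = chiFun J hJr S hS e θ ε lam (↑(b * a) * g * ↑(b * a)⁻¹) :=
        chiFun_one_add_mul_sub_one hJr hS e θ ψ lam hψ hlam _ hd g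
    _ = chiFun J hJr S hS e θ ε lam g := chiFun_conj hJr hS e θ ψ lam hψ _ _

/-- Proposition 4.1: the supercharacter `χ_{θ,λ}` is constant on superclasses:
`χ_{θ,λ}(1 + t·a·(g-1)·b·t⁻¹) = χ_{θ,λ}(g)` for all `g ∈ G`, `t ∈ H`, `a, b ∈ N`. -/
theorem chi_constant_on_superclasses
    {F A : Type*} [Field F] [Fintype F] [Ring A] [Algebra F A] [FiniteDimensional F A]
    (J : Ideal A) (hJ : J = (⊥ : Ideal A).jacobson)
    (hJr : ∀ x ∈ J, ∀ a : A, x * a ∈ J)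
    (hred : ∀ a b : A, a * b - b * a ∈ J)
    (S : Subalgebra F A)
    (hS : IsCompl (Subalgebra.toSubmodule S) (Submodule.restrictScalars F J))
    (e : A) (he : IsIdempotentElem e) (heS : e ∈ S)
    (lam : (Submodule.restrictScalars F J) →ₗ[F] F)
    (hlam : ∀ x (hx : x ∈ J), lam ⟨x, hx⟩ = lam ⟨e * x * e, hJr _ (J.mul_mem_left e hx) e⟩)
    (hreg : ¬ ∃ f : A, IsIdempotentElem f ∧ e * f * e = f ∧ f ≠ e ∧
      ∀ x (hx : x ∈ J), lam ⟨x, hx⟩ = lam ⟨f * x * f, hJr _ (J.mul_mem_left f hx) f⟩)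
    (θ : A → ℂ)
    (hθmul : ∀ h h' : A, MemHePrime S e h → MemHePrime S e h' → θ (h * h') = θ h * θ h')
    (hθne : ∀ h : A, MemHePrime S e h → θ h ≠ 0)
    (ε : F → ℂ) (hεadd : ∀ a b : F, ε (a + b) = ε a * ε b) (hε0 : ε 0 = 1)
    (hεnt : ∃ a : F, ε a ≠ 1) :
    ∀ g : Aˣ, ∀ t : Aˣ, (t : A) ∈ S → ((t⁻¹ : Aˣ) : A) ∈ S →
      ∀ a b : A, a - 1 ∈ J → b - 1 ∈ J →
        chiFun J hJr S hS e θ ε lam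
            (1 + (t : A) * a * ((g : A) - 1) * b * ((t⁻¹ : Aˣ) : A)) =
          chiFun J hJr S hS e θ ε lam (g : A) :=
  chi_constant_on_superclasses_general J hJ hJr S hS e lam hlam θ ε hεadd hε0 hεnt
end

section
/- Let e ∈ S be an idempotent and let λ, λ' ∈ J_e^* both be regular in J_e^*. If λ and λ' lie in the same G̃_e-orbit, then for every group homomorphism θ : H_{e'} → ℂ^× the induced characters coincide: χ_{θ,λ}(g) = χ_{θ,λ'}(g) for all g ∈ G. -/
/-- `λ, μ ∈ J_e^*` lie in the same `G̃_e`-orbit: `μ x = λ (t * a * x * b * s)` for all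
`x ∈ J`, where `t ∈ (eSe)ˣ` with inverse `s` (taken in `eAe`, so `t*s = s*t = e`) and
`a, b ∈ e + eJe`. -/
def SameOrbitJeStar {F A : Type*} [Field F] [Ring A] [Algebra F A]
    (J : Ideal A) (hJr : ∀ x ∈ J, ∀ a : A, x * a ∈ J) (S : Subalgebra F A) (e : A)
    (lam mu : (Submodule.restrictScalars F J) →ₗ[F] F) : Prop :=
  ∃ t s : A, t ∈ S ∧ s ∈ S ∧ e * t = t ∧ t * e = t ∧ e * s = s ∧ s * e = s ∧
    t * s = e ∧ s * t = e ∧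
    ∃ a b : A, a - e ∈ J ∧ e * a = a ∧ a * e = a ∧ b - e ∈ J ∧ e * b = b ∧ b * e = b ∧
      ∀ x (hx : x ∈ J), mu ⟨x, hx⟩ =
        lam ⟨t * a * x * b * s, hJr _ (hJr _ (J.mul_mem_left (t * a) hx) b) s⟩


/-!
Conjugation by a unit `n` of `A` commuting with `H_{e'}` carries `G_μ` onto `G_ν` and `ξ_{θ,μ}`
to `ξ_{θ,ν}` when `μ x = ν (n x n⁻¹)`, so it does not change the induced character. Likewise
`ν x = λ (x w)` with `w ∈ 1 + J` has the same left radical as `λ` and agrees with `λ` on it.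
Adding `1 - e` turns `t ∈ (eSe)ˣ` and `a, b ∈ e + eJe` into units `T, U, V` of `A` (for `a, b`
because `J` is the Jacobson radical), and since `λ ∈ J_e^*` only sees the corner `e y e`,
`λ (t a x b s) = λ (n x n⁻¹ w)` for `n = T U` and `w = T U V T⁻¹ ∈ 1 + J`.
-/

theorem isUnit_one_add_of_mem_jacobson_bot {R : Type*} [Ring R] {x : R}
    (hx : x ∈ (⊥ : Ideal R).jacobson) : IsUnit (1 + x) := by
  have left_inv : ∀ y ∈ (⊥ : Ideal R).jacobson, ∃ z, z * (1 + y) = 1 := fun y hy => by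
    obtain ⟨z, hz⟩ := Ideal.exists_mul_add_sub_mem_of_mem_jacobson y hy
    exact ⟨z, by rwa [Ideal.mem_bot, sub_eq_zero, add_comm] at hz⟩
  obtain ⟨z, hz⟩ := left_inv x hx
  -- `z = 1 + (-(z x))` again has a left inverse, which must then be `1 + x`
  obtain ⟨v, hv⟩ := left_inv _ (neg_mem (Ideal.mul_mem_left _ z hx))
  have hz' : 1 + -(z * x) = z := by rw [← hz]; noncomm_ring
  rw [hz'] at hv
  have hv' : v = 1 + x :=
    calc v = v * (z * (1 + x)) := by rw [hz, mul_one]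
      _ = 1 + x := by rw [← mul_assoc, hv, one_mul]
  exact ⟨⟨1 + x, z, by rw [← hv', hv], hz⟩, rfl⟩

theorem Units.mul_add_mul_inv {A : Type*} [Ring A] (n : Aˣ) {h : A} (hc : Commute (n : A) h)
    (x : A) :
    ↑n * (h + x) * ↑n⁻¹ = h + ↑n * x * ↑n⁻¹ := by
  rw [mul_add, add_mul, hc.eq, mul_assoc h, Units.mul_inv, mul_one]

section Corner

variable {A : Type*} [Ring A] {e : A}

theorem mul_add_one_sub {x : A} (hxe : x * e = x) (y : A) : x * (y + (1 - e)) = x * y := by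
  rw [mul_add, mul_sub, mul_one, hxe, sub_self, add_zero]

theorem add_one_sub_mul {x : A} (hex : e * x = x) (y : A) : (y + (1 - e)) * x = y * x := by
  rw [add_mul, sub_mul, one_mul, hex, sub_self, add_zero]

theorem add_one_sub_mul_add_one_sub (he : IsIdempotentElem e) {x : A} (hxe : x * e = x)
    {y : A} (hey : e * y = y) : (x + (1 - e)) * (y + (1 - e)) = x * y + (1 - e) := by
  rw [add_mul, mul_add_one_sub hxe, mul_add, sub_mul, one_mul, hey, sub_self, zero_add,
    he.one_sub.eq]

theorem commute_add_one_sub {h x : A} (hhe : h * e = e) (heh : e * h = e)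
    (hex : e * x = x) (hxe : x * e = x) : Commute h (x + (1 - e)) := by
  have hhx : h * x = x := by rw [← hex, ← mul_assoc, hhe]
  have hxh : x * h = x := by rw [← hxe, mul_assoc, heh]
  simp only [Commute, SemiconjBy, mul_add, add_mul, mul_sub, sub_mul, mul_one, one_mul, hhx, hxh,
    hhe, heh]

def cornerUnit (he : IsIdempotentElem e) {t s : A} (hts : t * s = e) (hst : s * t = e)
    (het : e * t = t) (hte : t * e = t) (hes : e * s = s) (hse : s * e = s) : Aˣ where
  val := t + (1 - e)
  inv := s + (1 - e)
  val_inv := by rw [add_one_sub_mul_add_one_sub he hte hes, hts, add_sub_cancel]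
  inv_val := by rw [add_one_sub_mul_add_one_sub he hse het, hst, add_sub_cancel]

theorem isUnit_add_one_sub_of_sub_mem_jacobson {a : A} (ha : a - e ∈ (⊥ : Ideal A).jacobson) :
    IsUnit (a + (1 - e)) := by
  rw [show a + (1 - e) = 1 + (a - e) by abel]
  exact isUnit_one_add_of_mem_jacobson_bot ha

end Corner

section InducedCharacter

variable {F A : Type*} [Field F] [Ring A] [Algebra F A] (J : Ideal A)
  (hJr : ∀ x ∈ J, ∀ a : A, x * a ∈ J) (S : Subalgebra F A)
  (hS : IsCompl (Subalgebra.toSubmodule S) (Submodule.restrictScalars F J))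
  (e : A) (θ : A → ℂ) (ε : F → ℂ)

theorem xiFun_add (lam : (Submodule.restrictScalars F J) →ₗ[F] F) {h x : A} (hh : h ∈ S)
    (hx : x ∈ J) : xiFun J S hS θ ε lam (h + x) = θ h * ε (lam ⟨x, hx⟩) := by
  change θ (Submodule.projectionOnto _ _ hS (h + x) : A) *
    ε (lam (Submodule.projectionOnto _ _ hS.symm (h + x))) = _
  rw [map_add, map_add, Submodule.projectionOnto_apply_of_mem_left hS hh,
    Submodule.projectionOnto_apply_of_mem_right hS (p := Subalgebra.toSubmodule S) hx,
    Submodule.projectionOnto_apply_of_mem_right hS.symm hh,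
    Submodule.projectionOnto_apply_of_mem_left hS.symm hx, add_zero, zero_add]

theorem chiFun_eq_of_conj {mu nu : (Submodule.restrictScalars F J) →ₗ[F] F} (n : Aˣ)
    (hmem : ∀ z, z ∈ GlamSet J hJr S e mu ↔ ↑n * z * ↑n⁻¹ ∈ GlamSet J hJr S e nu)
    (hxi : ∀ z ∈ GlamSet J hJr S e mu,
      xiFun J S hS θ ε mu z = xiFun J S hS θ ε nu (↑n * z * ↑n⁻¹))
    (g : A) : chiFun J hJr S hS e θ ε mu g = chiFun J hJr S hS e θ ε nu g := by
  have hconj : Set.BijOn (fun z : A => ↑n * z * ↑n⁻¹) (GlamSet J hJr S e mu)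
      (GlamSet J hJr S e nu) := by
    refine Set.InvOn.bijOn (f' := fun z : A => ↑n⁻¹ * z * ↑n) ⟨?_, ?_⟩
      (fun z hz => (hmem z).mp hz) (fun z hz => (hmem _).mpr ?_)
    · intro z _; simp [mul_assoc]
    · intro z _; simp [mul_assoc]
    · simpa [mul_assoc] using hz
  have hshift : ∀ σ : Aˣ, (((σ * n⁻¹)⁻¹ : Aˣ) : A) * g * (σ * n⁻¹ : Aˣ)
      = ↑n * (↑σ⁻¹ * g * ↑σ) * ↑n⁻¹ := fun σ => by simp [mul_assoc]
  have hsum : ∑ᶠ σ ∈ {σ : Aˣ | ((σ⁻¹ : Aˣ) : A) * g * σ ∈ GlamSet J hJr S e mu},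
        xiFun J S hS θ ε mu ((σ⁻¹ : Aˣ) * g * σ)
      = ∑ᶠ τ ∈ {τ : Aˣ | ((τ⁻¹ : Aˣ) : A) * g * τ ∈ GlamSet J hJr S e nu},
        xiFun J S hS θ ε nu ((τ⁻¹ : Aˣ) * g * τ) := by
    refine finsum_mem_eq_of_bijOn (fun σ => σ * n⁻¹)
      (Set.InvOn.bijOn (f' := fun τ => τ * n) ⟨fun σ _ => by simp, fun τ _ => by simp⟩
        (fun σ hσ => ?_) (fun τ hτ => ?_)) (fun σ hσ => ?_)
    · change _ ∈ GlamSet J hJr S e nu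
      rw [hshift]
      exact (hmem _).mp hσ
    · refine (hmem _).mpr ?_
      simpa [mul_assoc] using hτ
    · rw [hshift]; exact hxi _ hσ
  unfold chiFun
  rw [Nat.card_congr (hconj.equiv _), hsum]

theorem conj_mem_GlamSet {mu nu : (Submodule.restrictScalars F J) →ₗ[F] F} (n : Aˣ)
    (hfix : ∀ h, MemHePrime S e h → Commute (n : A) h)
    (hmu : ∀ x (hx : x ∈ J), mu ⟨x, hx⟩ = nu ⟨↑n * x * ↑n⁻¹, hJr _ (J.mul_mem_left _ hx) _⟩)
    {z : A} (hz : z ∈ GlamSet J hJr S e mu) : ↑n * z * ↑n⁻¹ ∈ GlamSet J hJr S e nu := by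
  obtain ⟨h, x, hh, ⟨hx, hrad⟩, rfl⟩ := hz
  refine ⟨h, ↑n * x * ↑n⁻¹, hh, ⟨hJr _ (J.mul_mem_left _ hx) _, fun u hu => ?_⟩,
    Units.mul_add_mul_inv n (hfix h hh) x⟩
  have hu' : ↑n⁻¹ * u * ↑n ∈ J := hJr _ (J.mul_mem_left _ hu) _
  calc nu ⟨↑n * x * ↑n⁻¹ * u, _⟩
      = nu ⟨↑n * (x * (↑n⁻¹ * u * ↑n)) * ↑n⁻¹,
          hJr _ (J.mul_mem_left _ (J.mul_mem_left _ hu')) _⟩ :=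
        DFunLike.congr_arg nu (Subtype.ext (by simp [mul_assoc]))
    _ = mu ⟨x * (↑n⁻¹ * u * ↑n), J.mul_mem_left _ hu'⟩ := (hmu _ _).symm
    _ = 0 := hrad _ hu'

theorem eq_conj_inv_of_eq_conj {mu nu : (Submodule.restrictScalars F J) →ₗ[F] F} (n : Aˣ)
    (hmu : ∀ x (hx : x ∈ J), mu ⟨x, hx⟩ = nu ⟨↑n * x * ↑n⁻¹, hJr _ (J.mul_mem_left _ hx) _⟩)
    (y : A) (hy : y ∈ J) :
    nu ⟨y, hy⟩ = mu ⟨↑n⁻¹ * y * ↑n⁻¹⁻¹, hJr _ (J.mul_mem_left _ hy) _⟩ := by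
  rw [hmu]
  exact DFunLike.congr_arg nu (Subtype.ext (by simp [mul_assoc]))

theorem chiFun_eq_of_eq_conj {mu nu : (Submodule.restrictScalars F J) →ₗ[F] F} (n : Aˣ)
    (hfix : ∀ h, MemHePrime S e h → Commute (n : A) h)
    (hmu : ∀ x (hx : x ∈ J), mu ⟨x, hx⟩ = nu ⟨↑n * x * ↑n⁻¹, hJr _ (J.mul_mem_left _ hx) _⟩)
    (g : A) : chiFun J hJr S hS e θ ε mu g = chiFun J hJr S hS e θ ε nu g := by
  refine chiFun_eq_of_conj J hJr S hS e θ ε n (fun z => ⟨conj_mem_GlamSet J hJr S e n hfix hmu,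
    fun hz => ?_⟩) ?_ g
  · simpa [mul_assoc] using conj_mem_GlamSet J hJr S e n⁻¹
      (fun h hh => (hfix h hh).units_inv_left) (eq_conj_inv_of_eq_conj J hJr n hmu) hz
  · rintro _ ⟨h, x, hh, ⟨hx, -⟩, rfl⟩
    rw [Units.mul_add_mul_inv n (hfix h hh), xiFun_add J S hS θ ε mu hh.1.1 hx,
      xiFun_add J S hS θ ε nu hh.1.1 (hJr _ (J.mul_mem_left _ hx) _), hmu]

theorem chiFun_eq_of_eq_mul_right {lam nu : (Submodule.restrictScalars F J) →ₗ[F] F} (w : Aˣ)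
    (hw : (w : A) - 1 ∈ J) (hnu : ∀ x (hx : x ∈ J), nu ⟨x, hx⟩ = lam ⟨x * w, hJr _ hx _⟩)
    (g : A) : chiFun J hJr S hS e θ ε nu g = chiFun J hJr S hS e θ ε lam g := by
  have hrad : ∀ x (hx : x ∈ J), (∀ u (_ : u ∈ J), nu ⟨x * u, hJr x hx u⟩ = 0) ↔
      (∀ u (_ : u ∈ J), lam ⟨x * u, hJr x hx u⟩ = 0) := fun x hx => by
    refine ⟨fun H u hu => ?_, fun H u hu => ?_⟩
    · rw [← H (u * ↑w⁻¹) (hJr _ hu _), hnu]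
      exact DFunLike.congr_arg lam (Subtype.ext (by simp [mul_assoc]))
    · rw [hnu, ← H (u * w) (hJr _ hu _)]
      exact DFunLike.congr_arg lam (Subtype.ext (mul_assoc x u w))
  have hset : GlamSet J hJr S e nu = GlamSet J hJr S e lam := by
    ext z
    constructor <;> rintro ⟨h, x, hh, ⟨hx, hr⟩, rfl⟩
    exacts [⟨h, x, hh, ⟨hx, (hrad x hx).mp hr⟩, rfl⟩, ⟨h, x, hh, ⟨hx, (hrad x hx).mpr hr⟩, rfl⟩]
  refine chiFun_eq_of_conj J hJr S hS e θ ε 1 (fun z => by simp [hset]) ?_ g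
  rintro _ ⟨h, x, hh, ⟨hx, hr⟩, rfl⟩
  -- on the radical, `λ (x w) = λ x + λ (x (w - 1)) = λ x`
  have hxw : lam ⟨x * w, hJr _ hx _⟩ = lam ⟨x, hx⟩ := by
    rw [← add_zero (lam ⟨x, hx⟩), ← (hrad x hx).mp hr _ hw, ← map_add]
    exact DFunLike.congr_arg lam (Subtype.ext (by simp [mul_sub]))
  simp only [Units.val_one, inv_one, one_mul, mul_one]
  rw [xiFun_add J S hS θ ε nu hh.1.1 hx, xiFun_add J S hS θ ε lam hh.1.1 hx, hnu, hxw]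

end InducedCharacter

theorem SameOrbitJeStar.exists_conj_mul_right {F A : Type*} [Field F] [Ring A] [Algebra F A]
    {J : Ideal A} (hJ : J = (⊥ : Ideal A).jacobson) {hJr : ∀ x ∈ J, ∀ a : A, x * a ∈ J}
    {S : Subalgebra F A} {e : A} (he : IsIdempotentElem e)
    {lam lam' : (Submodule.restrictScalars F J) →ₗ[F] F}
    (hlam : ∀ x (hx : x ∈ J), lam ⟨x, hx⟩ = lam ⟨e * x * e, hJr _ (J.mul_mem_left e hx) e⟩)
    (horb : SameOrbitJeStar J hJr S e lam lam') :
    ∃ n w : Aˣ, (∀ h, MemHePrime S e h → Commute (n : A) h) ∧ (w : A) - 1 ∈ J ∧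
      ∀ x (hx : x ∈ J), lam' ⟨x, hx⟩ =
        lam ⟨↑n * x * ↑n⁻¹ * ↑w, hJr _ (hJr _ (J.mul_mem_left _ hx) _) _⟩ := by
  obtain ⟨t, s, -, -, het, hte, hes, hse, hts, hst, a, b, haJ, hea, hae, hbJ, -, -, hlam'⟩ :=
    horb
  set T := cornerUnit he hts hst het hte hes hse
  obtain ⟨U, hU⟩ := isUnit_add_one_sub_of_sub_mem_jacobson (hJ ▸ haJ)
  obtain ⟨V, hV⟩ := isUnit_add_one_sub_of_sub_mem_jacobson (hJ ▸ hbJ)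
  have hU1 : (U : A) - 1 ∈ J := by rwa [hU, show a + (1 - e) - 1 = a - e by abel]
  have hV1 : (V : A) - 1 ∈ J := by rwa [hV, show b + (1 - e) - 1 = b - e by abel]
  refine ⟨T * U, T * U * V * T⁻¹, fun h hh => ?_, ?_, fun x hx => ?_⟩
  · refine Commute.symm ?_
    rw [Units.val_mul, hU]
    exact (commute_add_one_sub hh.2.1 hh.2.2 het hte).mul_right
      (commute_add_one_sub hh.2.1 hh.2.2 hea hae)
  · have hsplit : ((T * U * V * T⁻¹ : Aˣ) : A) - 1 = T * ((U - 1) * V + (V - 1)) * ↑T⁻¹ := by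
      simp [mul_sub, sub_mul, mul_assoc]
    rw [hsplit]
    exact hJr _ (J.mul_mem_left _ (add_mem (hJr _ hU1 _) hV1)) _
  · rw [hlam' x hx]
    conv_rhs => rw [hlam]
    refine DFunLike.congr_arg lam (Subtype.ext ?_)
    calc t * a * x * b * s = (t * (a + (1 - e))) * x * ((b + (1 - e)) * s) := by
          rw [mul_add_one_sub hte, add_one_sub_mul hes]; simp only [mul_assoc]
      _ = (e * (t + (1 - e))) * U * x * V * ((s + (1 - e)) * e) := by
          rw [mul_add_one_sub he.eq, add_one_sub_mul he.eq, het, hse, hU, hV]; simp only [mul_assoc]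
      _ = e * (↑(T * U) * x * ↑(T * U)⁻¹ * ↑(T * U * V * T⁻¹)) * e := by
          simp only [Units.val_mul, mul_inv_rev, Units.inv_mul_cancel_left, mul_assoc]; rfl

theorem chi_eq_of_sameOrbitJeStar_general
    {F A : Type*} [Field F] [Ring A] [Algebra F A]
    (J : Ideal A) (hJ : J = (⊥ : Ideal A).jacobson)
    (hJr : ∀ x ∈ J, ∀ a : A, x * a ∈ J)
    (S : Subalgebra F A)
    (hS : IsCompl (Subalgebra.toSubmodule S) (Submodule.restrictScalars F J))
    (e : A) (he : IsIdempotentElem e)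
    (lam lam' : (Submodule.restrictScalars F J) →ₗ[F] F)
    (hlam : ∀ x (hx : x ∈ J), lam ⟨x, hx⟩ = lam ⟨e * x * e, hJr _ (J.mul_mem_left e hx) e⟩)
    (horb : SameOrbitJeStar J hJr S e lam lam')
    (θ : A → ℂ)
    (ε : F → ℂ) :
    ∀ g : Aˣ, chiFun J hJr S hS e θ ε lam (g : A) =
      chiFun J hJr S hS e θ ε lam' (g : A) := by
  intro g
  obtain ⟨n, w, hfix, hw, hconj⟩ := horb.exists_conj_mul_right hJ he hlam
  let nu := lam.comp ((LinearMap.mulRight F (w : A)).restrict (p := J.restrictScalars F)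
    (q := J.restrictScalars F) fun x hx => hJr x hx w)
  exact (chiFun_eq_of_eq_mul_right J hJr S hS e θ ε (nu := nu) w hw (fun _ _ => rfl) g).symm.trans
    (chiFun_eq_of_eq_conj J hJr S hS e θ ε n hfix hconj g).symm

/-- Proposition 4.2: if the regular elements `λ, λ' ∈ J_e^*` lie in the same `G̃_e`-orbit,
then the induced supercharacters coincide: `χ_{θ,λ} = χ_{θ,λ'}`. -/
theorem chi_eq_of_sameOrbitJeStar
    {F A : Type*} [Field F] [Fintype F] [Ring A] [Algebra F A] [FiniteDimensional F A]
    (J : Ideal A) (hJ : J = (⊥ : Ideal A).jacobson)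
    (hJr : ∀ x ∈ J, ∀ a : A, x * a ∈ J)
    (hred : ∀ a b : A, a * b - b * a ∈ J)
    (S : Subalgebra F A)
    (hS : IsCompl (Subalgebra.toSubmodule S) (Submodule.restrictScalars F J))
    (e : A) (he : IsIdempotentElem e) (heS : e ∈ S)
    (lam lam' : (Submodule.restrictScalars F J) →ₗ[F] F)
    (hlam : ∀ x (hx : x ∈ J), lam ⟨x, hx⟩ = lam ⟨e * x * e, hJr _ (J.mul_mem_left e hx) e⟩)
    (hlam' : ∀ x (hx : x ∈ J),
      lam' ⟨x, hx⟩ = lam' ⟨e * x * e, hJr _ (J.mul_mem_left e hx) e⟩)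
    (hreg : ¬ ∃ f : A, IsIdempotentElem f ∧ e * f * e = f ∧ f ≠ e ∧
      ∀ x (hx : x ∈ J), lam ⟨x, hx⟩ = lam ⟨f * x * f, hJr _ (J.mul_mem_left f hx) f⟩)
    (hreg' : ¬ ∃ f : A, IsIdempotentElem f ∧ e * f * e = f ∧ f ≠ e ∧
      ∀ x (hx : x ∈ J), lam' ⟨x, hx⟩ = lam' ⟨f * x * f, hJr _ (J.mul_mem_left f hx) f⟩)
    (horb : SameOrbitJeStar J hJr S e lam lam')
    (θ : A → ℂ)
    (hθmul : ∀ h h' : A, MemHePrime S e h → MemHePrime S e h' → θ (h * h') = θ h * θ h')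
    (hθne : ∀ h : A, MemHePrime S e h → θ h ≠ 0)
    (ε : F → ℂ) (hεadd : ∀ a b : F, ε (a + b) = ε a * ε b) (hε0 : ε 0 = 1)
    (hεnt : ∃ a : F, ε a ≠ 1) :
    ∀ g : Aˣ, chiFun J hJr S hS e θ ε lam (g : A) =
      chiFun J hJr S hS e θ ε lam' (g : A) :=
  chi_eq_of_sameOrbitJeStar_general J hJ hJr S hS e he lam lam' hlam horb θ ε
end
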